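/- In the setting of the bifurcating branch above (assuming additionally that the curve is C²), the second derivative of the chemical potential at the bifurcation point satisfies μ''(0) · Σ_j (ψ^n_j)² = 2 Σ_j (ψ^n_j)⁴; in particular μ''(0) > 0, so the branch is locally concave up. -/

import Mathlib

/-- The discrete Schrödinger operator with harmonic potential. -/
noncomputable def discT (α Ω : ℝ) (ψ : ℤ → ℝ) (j : ℤ) : ℝ :=
  -(1 / (2 * α ^ 2)) * (ψ (j + 1) - 2 * ψ j + ψ (j - 1))
    + (1 / 2) * Ω ^ 2 * (α * (j : ℝ)) ^ 2 * ψ j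

/-!
Pairing the stationary equation for `ψ(s)` with `ψⁿ` and using that `T` is symmetric under
Dirichlet boundary conditions (summation by parts) cancels the linear part and leaves
`(μ(s) - Eₙ) ⟨ψⁿ + χ(s), ψⁿ⟩ = s² ⟨(ψⁿ + χ(s))³, ψⁿ⟩`. Differentiating twice at `s = 0` with the
Leibniz rule, the left side gives `μ''(0) ‖ψⁿ‖²` because `μ(0) = Eₙ` and `μ'(0) = 0`, and the right
side gives `2 Σ (ψⁿⱼ)⁴`.
-/

open Finset

theorem sum_Icc_mul_shift_eq {a b : ℤ} {u v : ℤ → ℝ} (hu : u (a - 1) = 0)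
    (hv : v (b + 1) = 0) :
    ∑ j ∈ Icc a b, u j * v (j + 1) = ∑ j ∈ Icc a b, u (j - 1) * v j := by
  rcases lt_or_ge b a with hba | hab
  · simp [Icc_eq_empty_of_lt hba]
  have hmap : Icc a (b + 1) = (Icc (a - 1) b).map (addRightEmbedding 1) := by
    rw [map_add_right_Icc, sub_add_cancel]
  calc ∑ j ∈ Icc a b, u j * v (j + 1)
      = ∑ j ∈ Icc (a - 1) b, u j * v (j + 1) := by
        rw [← insert_Icc_left_eq_Icc_sub_one (by omega), sum_insert (by simp), hu, zero_mul,
          zero_add]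
    _ = ∑ j ∈ Icc a (b + 1), u (j - 1) * v j := by
        rw [hmap, sum_map]
        simp
    _ = ∑ j ∈ Icc a b, u (j - 1) * v j := by
        rw [← insert_Icc_right_eq_Icc_add_one (by omega), sum_insert (by simp), hv, mul_zero,
          zero_add]

theorem sum_mul_discT_comm (α Ω : ℝ) {a b : ℤ} {u v : ℤ → ℝ}
    (hu₀ : u (a - 1) = 0) (hu₁ : u (b + 1) = 0) (hv₀ : v (a - 1) = 0) (hv₁ : v (b + 1) = 0) :
    ∑ j ∈ Icc a b, u j * discT α Ω v j = ∑ j ∈ Icc a b, v j * discT α Ω u j := by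
  have expand : ∀ w z : ℤ → ℝ, ∑ j ∈ Icc a b, w j * discT α Ω z j
      = -(1 / (2 * α ^ 2)) * (∑ j ∈ Icc a b, w j * z (j + 1) + ∑ j ∈ Icc a b, z (j - 1) * w j)
        + ∑ j ∈ Icc a b, (1 / α ^ 2 + 1 / 2 * Ω ^ 2 * (α * j) ^ 2) * (w j * z j) := by
    intro w z
    rw [← sum_add_distrib, mul_sum, ← sum_add_distrib]
    exact sum_congr rfl fun j _ => by simp only [discT]; ring
  rw [expand, expand, ← sum_Icc_mul_shift_eq hv₀ hu₁, ← sum_Icc_mul_shift_eq hu₀ hv₁,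
    add_comm (∑ j ∈ Icc a b, v j * u (j + 1))]
  congr 1
  exact sum_congr rfl fun j _ => by ring

theorem sum_mul_eigenvector_eq_of_stationary (α Ω : ℝ) {a b : ℤ} {E μ : ℝ} {ψ φ : ℤ → ℝ}
    (hψ₀ : ψ (a - 1) = 0) (hψ₁ : ψ (b + 1) = 0) (hφ₀ : φ (a - 1) = 0) (hφ₁ : φ (b + 1) = 0)
    (hψ : ∀ j ∈ Icc a b, discT α Ω ψ j = E * ψ j)
    (hφ : ∀ j ∈ Icc a b, discT α Ω φ j + φ j ^ 3 = μ * φ j) :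
    (μ - E) * ∑ j ∈ Icc a b, φ j * ψ j = ∑ j ∈ Icc a b, φ j ^ 3 * ψ j := by
  calc (μ - E) * ∑ j ∈ Icc a b, φ j * ψ j
      = ∑ j ∈ Icc a b, (ψ j * (μ * φ j - φ j ^ 3) - φ j * (E * ψ j))
        + ∑ j ∈ Icc a b, φ j ^ 3 * ψ j := by
        rw [← sum_add_distrib, mul_sum]
        exact sum_congr rfl fun j _ => by ring
    _ = ∑ j ∈ Icc a b, (ψ j * discT α Ω φ j - φ j * discT α Ω ψ j)
        + ∑ j ∈ Icc a b, φ j ^ 3 * ψ j := by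
        congr 1
        refine sum_congr rfl fun j hj => ?_
        rw [hψ j hj, ← hφ j hj, add_sub_cancel_right]
    _ = ∑ j ∈ Icc a b, φ j ^ 3 * ψ j := by
        rw [sum_sub_distrib, sum_mul_discT_comm α Ω hψ₀ hψ₁ hφ₀ hφ₁, sub_self, zero_add]

theorem deriv_deriv_mul_eq_of_sub_mul_eq_sq_mul {μ A B : ℝ → ℝ} {E : ℝ}
    (hμ : ContDiff ℝ 2 μ) (hA : ContDiff ℝ 2 A) (hB : ContDiff ℝ 2 B)
    (hμ0 : μ 0 = E) (hμ'0 : deriv μ 0 = 0)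
    (h : ∀ s, (μ s - E) * A s = s ^ 2 * B s) :
    deriv (deriv μ) 0 * A 0 = 2 * B 0 := by
  have h2 : iteratedDeriv 2 (fun s => (μ s - E) * A s) 0
      = iteratedDeriv 2 (fun s => s ^ 2 * B s) 0 := by simp only [h]
  rw [iteratedDeriv_fun_mul (hμ.sub contDiff_const).contDiffAt hA.contDiffAt,
    iteratedDeriv_fun_mul (f := fun s : ℝ => s ^ 2) (contDiff_id.pow 2).contDiffAt
      hB.contDiffAt] at h2
  simpa [sum_range_succ, iteratedDeriv_succ, hμ0, hμ'0] using h2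

theorem stmt3_general (K : ℕ) (α Ω : ℝ)
    (En : ℝ) (ψn : ℤ → ℝ)
    (hψn0 : ψn 0 = 0) (hψnK : ψn ((K : ℤ) + 1) = 0)
    (heig : ∀ j ∈ Finset.Icc (1 : ℤ) (K : ℤ), discT α Ω ψn j = En * ψn j)
    (hψnne : ∑ j ∈ Finset.Icc (1 : ℤ) (K : ℤ), (ψn j) ^ 2 ≠ 0)
    (μ : ℝ → ℝ) (χ : ℝ → ℤ → ℝ)
    (hμC2 : ContDiff ℝ 2 μ)
    (hχC2 : ∀ j : ℤ, ContDiff ℝ 2 (fun s => χ s j))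
    (hχ0 : χ 0 = 0) (hμ0 : μ 0 = En) (hμ'0 : deriv μ 0 = 0)
    (hχb0 : ∀ s, χ s 0 = 0) (hχbK : ∀ s, χ s ((K : ℤ) + 1) = 0)
    (hsol : ∀ s : ℝ, ∀ j ∈ Finset.Icc (1 : ℤ) (K : ℤ),
      discT α Ω (fun i => s * (ψn i + χ s i)) j + (s * (ψn j + χ s j)) ^ 3
        = μ s * (s * (ψn j + χ s j))) :
    deriv (deriv μ) 0 * ∑ j ∈ Finset.Icc (1 : ℤ) (K : ℤ), (ψn j) ^ 2
        = 2 * ∑ j ∈ Finset.Icc (1 : ℤ) (K : ℤ), (ψn j) ^ 4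
      ∧ 0 < deriv (deriv μ) 0 := by
  set S := Icc (1 : ℤ) K
  have key : ∀ s, (μ s - En) * ∑ j ∈ S, (ψn j + χ s j) * ψn j
      = s ^ 2 * ∑ j ∈ S, (ψn j + χ s j) ^ 3 * ψn j := by
    intro s
    rcases eq_or_ne s 0 with rfl | hs
    · simp [hμ0]
    have h := sum_mul_eigenvector_eq_of_stationary α Ω (φ := fun i => s * (ψn i + χ s i))
      (by simpa using hψn0) hψnK (by simp [hψn0, hχb0]) (by simp [hψnK, hχbK]) heig (hsol s)
    simp only [mul_pow, mul_assoc, ← mul_sum] at h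
    apply mul_left_cancel₀ hs
    linear_combination h
  have hA : ContDiff ℝ 2 fun s => ∑ j ∈ S, (ψn j + χ s j) * ψn j :=
    ContDiff.sum fun j _ => (contDiff_const.add (hχC2 j)).mul contDiff_const
  have hB : ContDiff ℝ 2 fun s => ∑ j ∈ S, (ψn j + χ s j) ^ 3 * ψn j :=
    ContDiff.sum fun j _ => ((contDiff_const.add (hχC2 j)).pow 3).mul contDiff_const
  have hmain := deriv_deriv_mul_eq_of_sub_mul_eq_sq_mul hμC2 hA hB hμ0 hμ'0 key
  simp only [hχ0, Pi.zero_apply, add_zero, ← sq, ← pow_succ, Nat.reduceAdd] at hmain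
  have hpos2 : 0 < ∑ j ∈ S, ψn j ^ 2 := (sum_nonneg fun j _ => sq_nonneg _).lt_of_ne' hψnne
  obtain ⟨j, hj, hψj⟩ := exists_ne_zero_of_sum_ne_zero hψnne
  have hpos4 : 0 < ∑ j ∈ S, ψn j ^ 4 := sum_pos' (fun j _ => by positivity)
    ⟨j, hj, Even.pow_pos (by decide) ((pow_ne_zero_iff two_ne_zero).mp hψj)⟩
  refine ⟨hmain, pos_of_mul_pos_left ?_ hpos2.le⟩
  rw [hmain]
  exact mul_pos two_pos hpos4

/-- along the C² bifurcating branch `ψ(s) = s(ψⁿ + χ(s))` of solutions of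
the stationary DNLS `Tψ + ψ³ = μψ`, the second derivative of the chemical potential
satisfies `μ''(0)·Σ(ψⁿ_j)² = 2·Σ(ψⁿ_j)⁴`; in particular `μ''(0) > 0`. -/
theorem stmt3 (K : ℕ) (hK : 1 ≤ K) (α Ω : ℝ) (hα : 0 < α) (hΩ : 0 < Ω)
    (En : ℝ) (ψn : ℤ → ℝ)
    (hψn0 : ψn 0 = 0) (hψnK : ψn ((K : ℤ) + 1) = 0)
    (heig : ∀ j ∈ Finset.Icc (1 : ℤ) (K : ℤ), discT α Ω ψn j = En * ψn j)
    (hψnne : ∑ j ∈ Finset.Icc (1 : ℤ) (K : ℤ), (ψn j) ^ 2 ≠ 0)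
    (μ : ℝ → ℝ) (χ : ℝ → ℤ → ℝ)
    (hμC2 : ContDiff ℝ 2 μ)
    (hχC2 : ∀ j : ℤ, ContDiff ℝ 2 (fun s => χ s j))
    (hχ0 : χ 0 = 0) (hμ0 : μ 0 = En) (hμ'0 : deriv μ 0 = 0)
    (hχb0 : ∀ s, χ s 0 = 0) (hχbK : ∀ s, χ s ((K : ℤ) + 1) = 0)
    (hsol : ∀ s : ℝ, ∀ j ∈ Finset.Icc (1 : ℤ) (K : ℤ),
      discT α Ω (fun i => s * (ψn i + χ s i)) j + (s * (ψn j + χ s j)) ^ 3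
        = μ s * (s * (ψn j + χ s j))) :
    deriv (deriv μ) 0 * ∑ j ∈ Finset.Icc (1 : ℤ) (K : ℤ), (ψn j) ^ 2
        = 2 * ∑ j ∈ Finset.Icc (1 : ℤ) (K : ℤ), (ψn j) ^ 4
      ∧ 0 < deriv (deriv μ) 0 :=
  stmt3_general K α Ω En ψn hψn0 hψnK heig hψnne μ χ hμC2 hχC2 hχ0 hμ0 hμ'0 hχb0 hχbK hsol
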